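/- arXiv:2510.15586 — 2 statements merged into one kernel-verified Lean document; each statement's English description precedes it below -/
import Mathlib

section
/- Let c be an admissible edge weighting of Q_n and let x_1, x_2, y_1, y_2 form a square in Q_n with edges e = {x_1,y_1}, f = {x_2,y_1}, g = {x_2,y_2}, h = {x_1,y_2}. If c(e) ≠ 0 and c(f) ≠ 0, then |c(e)| = |c(g)| and |c(f)| = |c(h)|. -/
open scoped Classical

noncomputable section

/-- Adjacency in the hypercube `Q_n`: differ in exactly one coordinate. -/
def hcAdj {n : ℕ} (x y : Fin n → Bool) : Prop :=
  (Finset.univ.filter (fun k => x k ≠ y k)).card = 1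

/-- Flip the `k`-th coordinate. -/
def hcFlip {n : ℕ} (x : Fin n → Bool) (k : Fin n) : Fin n → Bool :=
  Function.update x k (!x k)

/-- A vertex of `Q_n` is even if it has an even number of coordinates equal to `true`. -/
def hcEven {n : ℕ} (x : Fin n → Bool) : Prop :=
  (Finset.univ.filter (fun k => x k = true)).card % 2 = 0

/-- `i` belongs to `U_n(c)`: `i` is even and incident to an edge of nonzero weight. -/
def inU {n : ℕ} (c : (Fin n → Bool) → (Fin n → Bool) → ℂ) (i : Fin n → Bool) : Prop :=
  hcEven i ∧ ∃ j, hcAdj i j ∧ c i j ≠ 0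

/-- `j` belongs to `V_n(c)`: `j` is odd and incident to an edge of nonzero weight. -/
def inV {n : ℕ} (c : (Fin n → Bool) → (Fin n → Bool) → ℂ) (j : Fin n → Bool) : Prop :=
  ¬ hcEven j ∧ ∃ i, hcAdj i j ∧ c i j ≠ 0

/-- An edge weighting `c` of `Q_n` (with `c i j` the weight of the edge `{i,j}`,
`i` even, `j` odd) is admissible. -/
def Admissible {n : ℕ} (c : (Fin n → Bool) → (Fin n → Bool) → ℂ) : Prop :=
  (∀ j₁, inV c j₁ → ∀ j₂, inV c j₂ →
    ∑ i ∈ Finset.univ.filter (fun i => hcEven i ∧ hcAdj i j₁ ∧ hcAdj i j₂),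
      c i j₁ * (starRingEnd ℂ) (c i j₂) = if j₁ = j₂ then 1 else 0) ∧
  (∀ i₁, inU c i₁ → ∀ i₂, inU c i₂ →
    ∑ j ∈ Finset.univ.filter (fun j => ¬ hcEven j ∧ hcAdj i₁ j ∧ hcAdj i₂ j),
      c i₁ j * (starRingEnd ℂ) (c i₂ j) = if i₁ = i₂ then 1 else 0)


private lemma hcAdj_symm' {n : ℕ} {x y : Fin n → Bool} (h : hcAdj x y) : hcAdj y x := by
  unfold hcAdj at *
  rw [show (Finset.univ.filter (fun k => y k ≠ x k)) = (Finset.univ.filter (fun k => x k ≠ y k))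
    from Finset.filter_congr (fun k _ => by simp [ne_comm])]
  exact h

private lemma adj_ex' {n : ℕ} {x y : Fin n → Bool} (h : hcAdj x y) :
    ∃ a, x a ≠ y a ∧ ∀ k, k ≠ a → x k = y k := by
  obtain ⟨a, ha⟩ := Finset.card_eq_one.mp h
  refine ⟨a, ?_, ?_⟩
  · have : a ∈ Finset.univ.filter (fun k => x k ≠ y k) := ha ▸ Finset.mem_singleton_self a
    simpa using this
  · intro k hk
    by_contra hne
    have : k ∈ Finset.univ.filter (fun k => x k ≠ y k) := by simpa using hne
    rw [ha] at this
    exact hk (Finset.mem_singleton.mp this)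

private lemma common_struct' {n : ℕ} {x y₁ y₂ : Fin n → Bool} (hy : y₁ ≠ y₂)
    (h1 : hcAdj x y₁) (h2 : hcAdj x y₂) :
    ∃ a, y₁ a ≠ y₂ a ∧ x = fun k => if k = a then y₂ k else y₁ k := by
  obtain ⟨a, ha1, ha2⟩ := adj_ex' h1
  obtain ⟨b, hb1, hb2⟩ := adj_ex' h2
  have hab : a ≠ b := by
    rintro rfl
    apply hy
    funext k
    by_cases hk : k = a
    · subst hk
      revert ha1 hb1; cases x k <;> cases y₁ k <;> cases y₂ k <;> simp
    · rw [← ha2 k hk, hb2 k hk]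
  have hxa : x a = y₂ a := hb2 a hab
  refine ⟨a, fun h => ha1 (by rw [hxa, ← h]), ?_⟩
  funext k
  by_cases hk : k = a
  · subst hk; simp [hxa]
  · simp [hk, ha2 k hk]

private lemma common_two' {n : ℕ} {x₁ x₂ i y₁ y₂ : Fin n → Bool} (hy : y₁ ≠ y₂) (hx : x₁ ≠ x₂)
    (h11 : hcAdj x₁ y₁) (h12 : hcAdj x₁ y₂) (h21 : hcAdj x₂ y₁) (h22 : hcAdj x₂ y₂)
    (hi1 : hcAdj i y₁) (hi2 : hcAdj i y₂) : i = x₁ ∨ i = x₂ := by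
  obtain ⟨a₁, hd1, hr1⟩ := common_struct' hy h11 h12
  obtain ⟨a₂, hd2, hr2⟩ := common_struct' hy h21 h22
  obtain ⟨a, hd, hr⟩ := common_struct' hy hi1 hi2
  obtain ⟨b, hb1, hb2⟩ := adj_ex' h12
  have hsub : ∀ k, y₁ k ≠ y₂ k → k = a₁ ∨ k = b := by
    intro k hk
    by_contra hc
    push_neg at hc
    have h1 : x₁ k = y₁ k := by rw [hr1]; simp [hc.1]
    exact hk (h1.symm.trans (hb2 k hc.2))
  have key : ∀ a' : Fin n, y₁ a' ≠ y₂ a' → a' ≠ a₁ → a' = b := fun a' h h' =>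
    (hsub a' h).resolve_left h'
  by_cases hcase : a = a₁
  · left; rw [hr, hr1, hcase]
  · right
    have ha2 : a₂ ≠ a₁ := by
      intro hEq
      apply hx
      rw [hr1, hr2, hEq]
    rw [hr, hr2, key a hd hcase, key a₂ hd2 ha2]

/-- Let `c` be an admissible edge weighting of `Q_n` and let
`x₁, x₂, y₁, y₂` form a square in `Q_n` with edges `e = {x₁,y₁}`, `f = {x₂,y₁}`,
`g = {x₂,y₂}`, `h = {x₁,y₂}`.  If `c(e) ≠ 0` and `c(f) ≠ 0`, then
`|c(e)| = |c(g)|` and `|c(f)| = |c(h)|`. -/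
theorem admissible_square_abs {n : ℕ} (hn : 1 ≤ n)
    (c : (Fin n → Bool) → (Fin n → Bool) → ℂ) (hadm : Admissible c)
    (x₁ x₂ y₁ y₂ : Fin n → Bool)
    (he₁ : hcEven x₁) (he₂ : hcEven x₂) (ho₁ : ¬ hcEven y₁) (ho₂ : ¬ hcEven y₂)
    (hx : x₁ ≠ x₂) (hy : y₁ ≠ y₂)
    (h11 : hcAdj x₁ y₁) (h21 : hcAdj x₂ y₁) (h22 : hcAdj x₂ y₂) (h12 : hcAdj x₁ y₂)
    (hce : c x₁ y₁ ≠ 0) (hcf : c x₂ y₁ ≠ 0) :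
    ‖c x₁ y₁‖ = ‖c x₂ y₂‖ ∧
    ‖c x₂ y₁‖ = ‖c x₁ y₂‖ := by
  -- the sets of common neighbours in the two admissibility conditions
  have hsetV : Finset.univ.filter (fun i => hcEven i ∧ hcAdj i y₁ ∧ hcAdj i y₂) = {x₁, x₂} := by
    ext i
    simp only [Finset.mem_filter, Finset.mem_univ, true_and, Finset.mem_insert,
      Finset.mem_singleton]
    constructor
    · rintro ⟨-, h1, h2⟩
      exact common_two' hy hx h11 h12 h21 h22 h1 h2
    · rintro (rfl | rfl)
      · exact ⟨he₁, h11, h12⟩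
      · exact ⟨he₂, h21, h22⟩
  have hsetU : Finset.univ.filter (fun j => ¬ hcEven j ∧ hcAdj x₁ j ∧ hcAdj x₂ j) = {y₁, y₂} := by
    ext j
    simp only [Finset.mem_filter, Finset.mem_univ, true_and, Finset.mem_insert,
      Finset.mem_singleton]
    constructor
    · rintro ⟨-, h1, h2⟩
      exact common_two' hx hy (hcAdj_symm' h11) (hcAdj_symm' h21) (hcAdj_symm' h12)
        (hcAdj_symm' h22) (hcAdj_symm' h1) (hcAdj_symm' h2)
    · rintro (rfl | rfl)
      · exact ⟨ho₁, h11, h21⟩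
      · exact ⟨ho₂, h12, h22⟩
  have hU1 : inU c x₁ := ⟨he₁, y₁, h11, hce⟩
  have hU2 : inU c x₂ := ⟨he₂, y₁, h21, hcf⟩
  have hV1 : inV c y₁ := ⟨ho₁, x₁, h11, hce⟩
  -- row equation
  have row := hadm.2 x₁ hU1 x₂ hU2
  rw [hsetU, Finset.sum_pair hy, if_neg hx] at row
  -- row : c x₁ y₁ * conj (c x₂ y₁) + c x₁ y₂ * conj (c x₂ y₂) = 0
  have hef : c x₁ y₁ * (starRingEnd ℂ) (c x₂ y₁) ≠ 0 :=
    mul_ne_zero hce (by simpa using hcf)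
  have hhg : c x₁ y₂ * (starRingEnd ℂ) (c x₂ y₂) ≠ 0 := by
    intro h0
    rw [h0, add_zero] at row
    exact hef row
  have hch : c x₁ y₂ ≠ 0 := fun h0 => hhg (by rw [h0, zero_mul])
  have hcg : c x₂ y₂ ≠ 0 := by
    intro h0
    exact hhg (by rw [h0, map_zero, mul_zero])
  have hV2 : inV c y₂ := ⟨ho₂, x₁, h12, hch⟩
  -- column equation
  have col := hadm.1 y₁ hV1 y₂ hV2
  rw [hsetV, Finset.sum_pair hx, if_neg hy] at col
  -- col : c x₁ y₁ * conj (c x₁ y₂) + c x₂ y₁ * conj (c x₂ y₂) = 0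
  set A := ‖c x₁ y₁‖ with hA
  set B := ‖c x₂ y₁‖ with hB
  set C := ‖c x₂ y₂‖ with hC
  set D := ‖c x₁ y₂‖ with hD
  have hApos : 0 < A := norm_pos_iff.mpr hce
  have hBpos : 0 < B := norm_pos_iff.mpr hcf
  have hCpos : 0 < C := norm_pos_iff.mpr hcg
  have hDpos : 0 < D := norm_pos_iff.mpr hch
  have eq1 : A * B = D * C := by
    have : c x₁ y₁ * (starRingEnd ℂ) (c x₂ y₁) = -(c x₁ y₂ * (starRingEnd ℂ) (c x₂ y₂)) := by
      linear_combination row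
    have := congrArg norm this
    simpa [norm_mul, Complex.norm_conj] using this
  have eq2 : A * D = B * C := by
    have : c x₁ y₁ * (starRingEnd ℂ) (c x₁ y₂) = -(c x₂ y₁ * (starRingEnd ℂ) (c x₂ y₂)) := by
      linear_combination col
    have := congrArg norm this
    simpa [norm_mul, Complex.norm_conj] using this
  have hAC : A = C := by
    have hsq : A * A * (B * D) = C * C * (B * D) := by
      calc A * A * (B * D) = (A * B) * (A * D) := by ring
        _ = (D * C) * (B * C) := by rw [eq1, eq2]
        _ = C * C * (B * D) := by ring
    have h2 : A * A = C * C := mul_right_cancel₀ (by positivity) hsq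
    nlinarith
  have hBD : B = D := by
    have h3 : B * C = D * C := by linear_combination eq1 - B * hAC
    exact mul_right_cancel₀ hCpos.ne' h3
  exact ⟨hAC, hBD⟩
end
end

section
/- For every n ≥ 1 and every t = (t_0,…,t_{n-1}) in the standard simplex Δ_{n-1}, the edge weighting c_t of Q_n is admissible, and U_n(c_t) equals the full set U_n of even vertices of Q_n. -/
open scoped Classical

noncomputable section

/-- The finite set `U_n(c)` of supported even vertices. -/
def UFin {n : ℕ} (c : (Fin n → Bool) → (Fin n → Bool) → ℂ) : Finset (Fin n → Bool) :=
  Finset.univ.filter (inU c)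

/-- The finite set `V_n(c)` of supported odd vertices. -/
def VFin {n : ℕ} (c : (Fin n → Bool) → (Fin n → Bool) → ℂ) : Finset (Fin n → Bool) :=
  Finset.univ.filter (inV c)

/-- For an odd vertex `j`, the vector `ψ_j ∈ ℂ^{U_n(c)}` whose `i`-th entry is `c i j`
if `{i,j}` is an edge of `Q_n` and `0` otherwise. -/
def psi {n : ℕ} (c : (Fin n → Bool) → (Fin n → Bool) → ℂ) (j : Fin n → Bool) :
    EuclideanSpace ℂ {i : Fin n → Bool // i ∈ UFin c} :=
  WithLp.toLp 2 (fun i => if hcAdj i.1 j then c i.1 j else 0)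

/-- The representation `ρ_c`: an even vertex `i ∈ U_n(c)` is sent to the matrix unit
`E_{ii}`, an odd vertex `j ∈ V_n(c)` to the orthogonal projection onto the span of the
unit vector `ψ_j` (the rank-one matrix `ψ_j ψ_j^*`), and every other vertex to `0`. -/
def rhoRep {n : ℕ} (c : (Fin n → Bool) → (Fin n → Bool) → ℂ) (x : Fin n → Bool) :
    Matrix {i : Fin n → Bool // i ∈ UFin c} {i : Fin n → Bool // i ∈ UFin c} ℂ :=
  if hcEven x then (fun i i' => if i.1 = x ∧ i'.1 = x then 1 else 0)
  else (fun i i' => psi c x i * (starRingEnd ℂ) (psi c x i'))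

/-- `hcPar k i` is the number of indices `ℓ ≤ k` with `i ℓ = true` (its parity is
`par_k(i)` from the paper). -/
def hcPar {n : ℕ} (k : Fin n) (i : Fin n → Bool) : ℕ :=
  (Finset.univ.filter (fun ℓ => ℓ ≤ k ∧ i ℓ = true)).card

/-- The edge weighting `c_t` associated to a point `t` of the standard simplex: the
edge `{i, i#k}` with `i` even gets the weight `(−1)^{par_k(i)} √(t_k)`. -/
def ctWeight {n : ℕ} (t : Fin n → ℝ) :
    (Fin n → Bool) → (Fin n → Bool) → ℂ :=
  fun i j => ∑ k ∈ Finset.univ.filter (fun k => j = hcFlip i k),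
    (-1 : ℂ) ^ hcPar k i * (Real.sqrt (t k) : ℂ)

section Aux

variable {n : ℕ}

lemma hcFlip_self (i : Fin n → Bool) (k : Fin n) : hcFlip i k k = !(i k) :=
  Function.update_self _ _ _

lemma hcFlip_ne (i : Fin n → Bool) {k m : Fin n} (h : m ≠ k) : hcFlip i k m = i m :=
  Function.update_of_ne h _ _

lemma hcFlip_flip (i : Fin n → Bool) (k : Fin n) : hcFlip (hcFlip i k) k = i := by
  funext m
  by_cases h : m = k
  · subst h; rw [hcFlip_self, hcFlip_self, Bool.not_not]
  · rw [hcFlip_ne _ h, hcFlip_ne _ h]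

lemma hcFlip_inj (i : Fin n → Bool) {k l : Fin n} (h : hcFlip i k = hcFlip i l) : k = l := by
  by_contra hne
  have h1 := congrFun h k
  rw [hcFlip_self, hcFlip_ne _ hne] at h1
  simp at h1

lemma hcAdj_iff (i j : Fin n → Bool) : hcAdj i j ↔ ∃ k, j = hcFlip i k := by
  unfold hcAdj
  rw [Finset.card_eq_one]
  constructor
  · rintro ⟨k, hk⟩
    refine ⟨k, funext fun m => ?_⟩
    by_cases hm : m = k
    · subst hm
      have : m ∈ Finset.univ.filter (fun k => i k ≠ j k) := hk ▸ Finset.mem_singleton_self m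
      rw [Finset.mem_filter] at this
      rw [hcFlip_self]
      revert this
      cases i m <;> cases j m <;> simp
    · have : m ∉ Finset.univ.filter (fun k => i k ≠ j k) := by
        rw [hk, Finset.mem_singleton]; exact hm
      rw [Finset.mem_filter] at this
      push_neg at this
      rw [hcFlip_ne _ hm]
      exact (this (Finset.mem_univ m)).symm
  · rintro ⟨k, rfl⟩
    refine ⟨k, ?_⟩
    ext m
    simp only [Finset.mem_filter, Finset.mem_univ, true_and, Finset.mem_singleton]
    by_cases hm : m = k
    · subst hm; rw [hcFlip_self]; cases i m <;> simp
    · rw [hcFlip_ne _ hm]; simp [hm]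

lemma hcAdj_comm {i j : Fin n → Bool} (h : hcAdj i j) : hcAdj j i := by
  obtain ⟨k, rfl⟩ := (hcAdj_iff i j).mp h
  exact (hcAdj_iff _ _).mpr ⟨k, (hcFlip_flip i k).symm⟩

lemma card_filter_flip_mod (i : Fin n → Bool) (m : Fin n) (P : Fin n → Prop)
    [DecidablePred P] :
    (Finset.univ.filter (fun ℓ => P ℓ ∧ hcFlip i m ℓ = true)).card % 2
      = ((Finset.univ.filter (fun ℓ => P ℓ ∧ i ℓ = true)).card
          + if P m then 1 else 0) % 2 := by
  set A := Finset.univ.filter (fun ℓ => P ℓ ∧ i ℓ = true) with hA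
  by_cases hP : P m
  · rw [if_pos hP]
    by_cases him : i m = true
    · have hmA : m ∈ A := by simp [hA, hP, him]
      have hset : Finset.univ.filter (fun ℓ => P ℓ ∧ hcFlip i m ℓ = true) = A.erase m := by
        ext ℓ
        simp only [Finset.mem_filter, Finset.mem_erase, Finset.mem_univ, true_and, hA]
        by_cases hl : ℓ = m
        · subst hl; simp [hcFlip_self, him]
        · rw [hcFlip_ne _ hl]; simp [hl]
      have hpos : 1 ≤ A.card := Finset.card_pos.mpr ⟨m, hmA⟩
      rw [hset, Finset.card_erase_of_mem hmA]
      omega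
    · have hmA : m ∉ A := by simp [hA, him]
      have hset : Finset.univ.filter (fun ℓ => P ℓ ∧ hcFlip i m ℓ = true) = insert m A := by
        ext ℓ
        simp only [Finset.mem_filter, Finset.mem_insert, Finset.mem_univ, true_and, hA]
        by_cases hl : ℓ = m
        · subst hl; simp [hcFlip_self, him, hP]
        · rw [hcFlip_ne _ hl]; simp [hl]
      rw [hset, Finset.card_insert_of_notMem hmA]
  · rw [if_neg hP]
    have hset : Finset.univ.filter (fun ℓ => P ℓ ∧ hcFlip i m ℓ = true) = A := by
      ext ℓ
      simp only [Finset.mem_filter, Finset.mem_univ, true_and, hA]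
      by_cases hl : ℓ = m
      · subst hl; simp [hP]
      · rw [hcFlip_ne _ hl]
    rw [hset, Nat.add_zero]

lemma hcEven_flip (i : Fin n → Bool) (k : Fin n) : hcEven (hcFlip i k) ↔ ¬ hcEven i := by
  have h := card_filter_flip_mod i k (fun _ => True)
  simp only [true_and, if_true] at h
  unfold hcEven
  omega

lemma hcPar_flip_mod (k m : Fin n) (i : Fin n → Bool) :
    hcPar k (hcFlip i m) % 2 = (hcPar k i + if m ≤ k then 1 else 0) % 2 :=
  card_filter_flip_mod i m (fun ℓ => ℓ ≤ k)

lemma parity_odd {k l : Fin n} (hkl : k ≠ l) (i : Fin n → Bool) :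
    (hcPar k i + hcPar l i + hcPar k (hcFlip (hcFlip i k) l)
      + hcPar l (hcFlip (hcFlip i k) l)) % 2 = 1 := by
  have h1 := hcPar_flip_mod k l (hcFlip i k)
  have h2 := hcPar_flip_mod l l (hcFlip i k)
  have h3 := hcPar_flip_mod k k i
  have h4 := hcPar_flip_mod l k i
  simp only [le_refl, if_true] at h2 h3
  rcases lt_or_gt_of_ne hkl with h | h
  · rw [if_neg (not_le.mpr h)] at h1
    rw [if_pos h.le] at h4
    omega
  · rw [if_pos h.le] at h1
    rw [if_neg (not_le.mpr h)] at h4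
    omega

lemma ctWeight_flip (t : Fin n → ℝ) (i : Fin n → Bool) (k : Fin n) :
    ctWeight t i (hcFlip i k) = (-1) ^ hcPar k i * (Real.sqrt (t k) : ℂ) := by
  unfold ctWeight
  have hset : Finset.univ.filter (fun k' => hcFlip i k = hcFlip i k') = {k} := by
    ext m
    simp only [Finset.mem_filter, Finset.mem_univ, true_and, Finset.mem_singleton]
    constructor
    · intro h; exact hcFlip_inj i h.symm
    · rintro rfl; rfl
  rw [hset, Finset.sum_singleton]

lemma ctWeight_eq_zero {t : Fin n → ℝ} {i j : Fin n → Bool} (h : ¬ hcAdj i j) :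
    ctWeight t i j = 0 := by
  unfold ctWeight
  rw [Finset.filter_eq_empty_iff.mpr, Finset.sum_empty]
  intro k _ hk
  exact h ((hcAdj_iff i j).mpr ⟨k, hk⟩)

lemma conj_ctWeight (t : Fin n → ℝ) (i j : Fin n → Bool) :
    (starRingEnd ℂ) (ctWeight t i j) = ctWeight t i j := by
  unfold ctWeight
  rw [map_sum]
  refine Finset.sum_congr rfl fun k _ => ?_
  rw [map_mul, map_pow, map_neg, map_one, Complex.conj_ofReal]

lemma flip_comm {k l : Fin n} (h : k ≠ l) (i : Fin n → Bool) :
    hcFlip (hcFlip i k) l = hcFlip (hcFlip i l) k := by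
  funext m
  by_cases hk : m = k
  · subst hk
    rw [hcFlip_ne _ h, hcFlip_self, hcFlip_self, hcFlip_ne _ h]
  · by_cases hl : m = l
    · subst hl
      rw [hcFlip_self, hcFlip_ne _ (Ne.symm h), hcFlip_ne _ (Ne.symm h), hcFlip_self]
    · rw [hcFlip_ne _ hl, hcFlip_ne _ hk, hcFlip_ne _ hk, hcFlip_ne _ hl]

lemma flip2_ne_iff {k l : Fin n} (hkl : k ≠ l) (i : Fin n → Bool) (m : Fin n) :
    hcFlip (hcFlip i k) l m ≠ i m ↔ (m = k ∨ m = l) := by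
  by_cases hk : m = k
  · subst hk
    rw [hcFlip_ne _ hkl, hcFlip_self]
    simp
  · by_cases hl : m = l
    · subst hl
      rw [hcFlip_self, hcFlip_ne _ (Ne.symm hkl)]
      simp
    · rw [hcFlip_ne _ hl, hcFlip_ne _ hk]
      simp [hk, hl]

lemma flip2_eq_flip2 {k l k' l' : Fin n} (hkl : k ≠ l) (hkl' : k' ≠ l')
    (i : Fin n → Bool) (h : hcFlip (hcFlip i k) l = hcFlip (hcFlip i k') l') :
    (k = k' ∧ l = l') ∨ (k = l' ∧ l = k') := by
  have hk : k = k' ∨ k = l' := by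
    have h1 : hcFlip (hcFlip i k') l' k ≠ i k := by
      rw [← h]; exact (flip2_ne_iff hkl i k).mpr (Or.inl rfl)
    exact (flip2_ne_iff hkl' i k).mp h1
  have hl : l = k' ∨ l = l' := by
    have h1 : hcFlip (hcFlip i k') l' l ≠ i l := by
      rw [← h]; exact (flip2_ne_iff hkl i l).mpr (Or.inr rfl)
    exact (flip2_ne_iff hkl' i l).mp h1
  rcases hk with h1 | h1 <;> rcases hl with h2 | h2
  · exact absurd (h1.trans h2.symm) hkl
  · exact Or.inl ⟨h1, h2⟩
  · exact Or.inr ⟨h1, h2⟩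
  · exact absurd (h1.trans h2.symm) hkl

lemma common_adj {a b x : Fin n → Bool} (hab : a ≠ b) (hxa : hcAdj x a) (hxb : hcAdj x b) :
    ∃ k l, k ≠ l ∧ b = hcFlip (hcFlip a k) l ∧ x = hcFlip a k := by
  obtain ⟨k, hk⟩ := (hcAdj_iff x a).mp hxa
  obtain ⟨l, hl⟩ := (hcAdj_iff x b).mp hxb
  have hx : x = hcFlip a k := by rw [hk, hcFlip_flip]
  have hb : b = hcFlip (hcFlip a k) l := by rw [← hx]; exact hl
  refine ⟨k, l, ?_, hb, hx⟩
  rintro rfl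
  have hba : b = a := by rw [hb, hcFlip_flip]
  exact hab hba.symm

lemma cancel_lemma (a₁ a₂ b₁ b₂ : ℕ) (h : (a₁ + a₂ + b₁ + b₂) % 2 = 1) (x y : ℂ) :
    ((-1) ^ a₁ * x) * ((-1) ^ a₂ * y) + ((-1) ^ b₁ * y) * ((-1) ^ b₂ * x) = 0 := by
  have h1 : ((-1 : ℂ)) ^ (a₁ + a₂ + b₁ + b₂) = -1 :=
    Odd.neg_one_pow ⟨(a₁ + a₂ + b₁ + b₂) / 2, by omega⟩
  have e : ((-1 : ℂ) ^ a₁ * (-1) ^ a₂) * ((-1) ^ b₁ * (-1) ^ b₂) = -1 := by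
    simp only [← pow_add]
    rw [show a₁ + a₂ + (b₁ + b₂) = a₁ + a₂ + b₁ + b₂ by ring]
    exact h1
  have u : ((-1 : ℂ) ^ b₁ * (-1) ^ b₂) * ((-1) ^ b₁ * (-1) ^ b₂) = 1 := by
    simp only [← pow_add]
    exact Even.neg_one_pow ⟨b₁ + b₂, by ring⟩
  linear_combination x * y * ((-1 : ℂ) ^ b₁ * (-1) ^ b₂) * e
    - x * y * ((-1 : ℂ) ^ a₁ * (-1) ^ a₂) * u

end Aux

/-- For every `n ≥ 1` and every `t` in the standard simplex
`Δ_{n-1}`, the edge weighting `c_t` of `Q_n` is admissible and `U_n(c_t)` is the full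
set of even vertices of `Q_n`. -/
theorem ctWeight_admissible {n : ℕ} (hn : 1 ≤ n)
    (t : Fin n → ℝ) (ht0 : ∀ k, 0 ≤ t k) (ht1 : ∑ k, t k = 1) :
    Admissible (ctWeight t) ∧
    UFin (ctWeight t) = Finset.univ.filter (fun i => hcEven i) := by
  obtain ⟨k₀, hk₀⟩ : ∃ k, t k ≠ 0 := by
    by_contra hc
    push_neg at hc
    rw [Finset.sum_eq_zero (fun k _ => hc k)] at ht1
    simp at ht1
  have hsq : (Real.sqrt (t k₀) : ℂ) ≠ 0 :=
    Complex.ofReal_ne_zero.mpr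
      (Real.sqrt_ne_zero'.mpr (lt_of_le_of_ne (ht0 k₀) (Ne.symm hk₀)))
  have hnz : ∀ i : Fin n → Bool, ctWeight t i (hcFlip i k₀) ≠ 0 := by
    intro i
    rw [ctWeight_flip]
    exact mul_ne_zero (pow_ne_zero _ (neg_ne_zero.mpr one_ne_zero)) hsq
  have hU : ∀ i, inU (ctWeight t) i ↔ hcEven i := by
    intro i
    constructor
    · exact fun h => h.1
    · intro h
      exact ⟨h, hcFlip i k₀, (hcAdj_iff _ _).mpr ⟨k₀, rfl⟩, hnz i⟩
  have hdiagterm : ∀ k : Fin n, ∀ i : Fin n → Bool,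
      ctWeight t i (hcFlip i k) * (starRingEnd ℂ) (ctWeight t i (hcFlip i k))
        = ((t k : ℝ) : ℂ) := by
    intro k i
    rw [conj_ctWeight, ctWeight_flip]
    have hsqk : (Real.sqrt (t k) : ℂ) * (Real.sqrt (t k)) = ((t k : ℝ) : ℂ) := by
      rw [← Complex.ofReal_mul, Real.mul_self_sqrt (ht0 k)]
    have hsgn : ((-1 : ℂ) ^ hcPar k i) * ((-1) ^ hcPar k i) = 1 := by
      rw [← pow_add]; exact Even.neg_one_pow ⟨_, rfl⟩
    rw [mul_mul_mul_comm, hsgn, one_mul, hsqk]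
  refine ⟨⟨?_, ?_⟩, ?_⟩
  · -- condition on V
    intro j₁ hj₁ j₂ hj₂
    have hodd : ¬ hcEven j₁ := hj₁.1
    by_cases hjj : j₁ = j₂
    · subst hjj
      rw [if_pos rfl]
      have hset : (Finset.univ.filter (fun i => hcEven i ∧ hcAdj i j₁ ∧ hcAdj i j₁))
          = Finset.image (hcFlip j₁) Finset.univ := by
        ext x
        simp only [Finset.mem_filter, Finset.mem_image, Finset.mem_univ, true_and]
        constructor
        · rintro ⟨-, hadj, -⟩
          obtain ⟨k, hk⟩ := (hcAdj_iff x j₁).mp hadj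
          exact ⟨k, by rw [hk, hcFlip_flip]⟩
        · rintro ⟨k, rfl⟩
          exact ⟨(hcEven_flip j₁ k).mpr hodd,
            (hcAdj_iff _ _).mpr ⟨k, (hcFlip_flip j₁ k).symm⟩,
            (hcAdj_iff _ _).mpr ⟨k, (hcFlip_flip j₁ k).symm⟩⟩
      rw [hset, Finset.sum_image (fun a _ b _ h => hcFlip_inj j₁ h)]
      have hterm : ∀ k : Fin n, ctWeight t (hcFlip j₁ k) j₁
          * (starRingEnd ℂ) (ctWeight t (hcFlip j₁ k) j₁) = ((t k : ℝ) : ℂ) := by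
        intro k
        have h1 := hdiagterm k (hcFlip j₁ k)
        rwa [hcFlip_flip] at h1
      rw [Finset.sum_congr rfl (fun k _ => hterm k)]
      norm_cast
    · rw [if_neg hjj]
      by_cases hex : ∃ k l, k ≠ l ∧ j₂ = hcFlip (hcFlip j₁ k) l
      · obtain ⟨k, l, hkl, hb⟩ := hex
        have hne : hcFlip j₁ k ≠ hcFlip j₁ l := fun h => hkl (hcFlip_inj j₁ h)
        have hset : (Finset.univ.filter (fun i => hcEven i ∧ hcAdj i j₁ ∧ hcAdj i j₂))
            = {hcFlip j₁ k, hcFlip j₁ l} := by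
          ext x
          simp only [Finset.mem_filter, Finset.mem_univ, true_and, Finset.mem_insert,
            Finset.mem_singleton]
          constructor
          · rintro ⟨-, ha, hb'⟩
            obtain ⟨k', l', hkl', hb2, hx⟩ := common_adj hjj ha hb'
            rcases flip2_eq_flip2 hkl' hkl j₁ (hb2.symm.trans hb) with ⟨h1, -⟩ | ⟨h1, -⟩
            · left; rw [hx, h1]
            · right; rw [hx, h1]
          · have hadjk : hcAdj (hcFlip j₁ k) j₁ :=
              (hcAdj_iff _ _).mpr ⟨k, (hcFlip_flip j₁ k).symm⟩
            have hadjl : hcAdj (hcFlip j₁ l) j₁ :=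
              (hcAdj_iff _ _).mpr ⟨l, (hcFlip_flip j₁ l).symm⟩
            rintro (rfl | rfl)
            · exact ⟨(hcEven_flip j₁ k).mpr hodd, hadjk, (hcAdj_iff _ _).mpr ⟨l, hb⟩⟩
            · refine ⟨(hcEven_flip j₁ l).mpr hodd, hadjl, (hcAdj_iff _ _).mpr ⟨k, ?_⟩⟩
              rw [hb, flip_comm hkl]
        rw [hset, Finset.sum_pair hne, conj_ctWeight, conj_ctWeight]
        have e1 : ctWeight t (hcFlip j₁ k) j₁
            = (-1) ^ hcPar k (hcFlip j₁ k) * (Real.sqrt (t k) : ℂ) := by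
          have h1 := ctWeight_flip t (hcFlip j₁ k) k
          rwa [hcFlip_flip] at h1
        have e2 : ctWeight t (hcFlip j₁ k) j₂
            = (-1) ^ hcPar l (hcFlip j₁ k) * (Real.sqrt (t l) : ℂ) := by
          have h1 := ctWeight_flip t (hcFlip j₁ k) l
          rwa [← hb] at h1
        have e3 : ctWeight t (hcFlip j₁ l) j₁
            = (-1) ^ hcPar l (hcFlip j₁ l) * (Real.sqrt (t l) : ℂ) := by
          have h1 := ctWeight_flip t (hcFlip j₁ l) l
          rwa [hcFlip_flip] at h1
        have e4 : ctWeight t (hcFlip j₁ l) j₂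
            = (-1) ^ hcPar k (hcFlip j₁ l) * (Real.sqrt (t k) : ℂ) := by
          have h1 := ctWeight_flip t (hcFlip j₁ l) k
          rwa [← flip_comm hkl, ← hb] at h1
        rw [e1, e2, e3, e4]
        apply cancel_lemma
        have hp := parity_odd hkl (hcFlip j₁ k)
        rw [hcFlip_flip] at hp
        omega
      · rw [Finset.filter_eq_empty_iff.mpr, Finset.sum_empty]
        rintro x - ⟨-, ha, hb'⟩
        obtain ⟨k, l, hkl, hb2, -⟩ := common_adj hjj ha hb'
        exact hex ⟨k, l, hkl, hb2⟩
  · -- condition on U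
    intro i₁ hi₁ i₂ hi₂
    have hev : hcEven i₁ := hi₁.1
    by_cases hii : i₁ = i₂
    · subst hii
      rw [if_pos rfl]
      have hset : (Finset.univ.filter (fun j => ¬ hcEven j ∧ hcAdj i₁ j ∧ hcAdj i₁ j))
          = Finset.image (hcFlip i₁) Finset.univ := by
        ext x
        simp only [Finset.mem_filter, Finset.mem_image, Finset.mem_univ, true_and]
        constructor
        · rintro ⟨-, hadj, -⟩
          obtain ⟨k, hk⟩ := (hcAdj_iff i₁ x).mp hadj
          exact ⟨k, hk.symm⟩
        · rintro ⟨k, rfl⟩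
          have hadjk : hcAdj i₁ (hcFlip i₁ k) := (hcAdj_iff _ _).mpr ⟨k, rfl⟩
          exact ⟨fun h => ((hcEven_flip i₁ k).mp h) hev, hadjk, hadjk⟩
      rw [hset, Finset.sum_image (fun a _ b _ h => hcFlip_inj i₁ h)]
      rw [Finset.sum_congr rfl (fun k _ => hdiagterm k i₁)]
      norm_cast
    · rw [if_neg hii]
      by_cases hex : ∃ k l, k ≠ l ∧ i₂ = hcFlip (hcFlip i₁ k) l
      · obtain ⟨k, l, hkl, hb⟩ := hex
        have hne : hcFlip i₁ k ≠ hcFlip i₁ l := fun h => hkl (hcFlip_inj i₁ h)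
        have hset : (Finset.univ.filter (fun j => ¬ hcEven j ∧ hcAdj i₁ j ∧ hcAdj i₂ j))
            = {hcFlip i₁ k, hcFlip i₁ l} := by
          ext x
          simp only [Finset.mem_filter, Finset.mem_univ, true_and, Finset.mem_insert,
            Finset.mem_singleton]
          constructor
          · rintro ⟨-, ha, hb'⟩
            obtain ⟨k', l', hkl', hb2, hx⟩ :=
              common_adj hii (hcAdj_comm ha) (hcAdj_comm hb')
            rcases flip2_eq_flip2 hkl' hkl i₁ (hb2.symm.trans hb) with ⟨h1, -⟩ | ⟨h1, -⟩
            · left; rw [hx, h1]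
            · right; rw [hx, h1]
          · have hadjk : hcAdj i₁ (hcFlip i₁ k) := (hcAdj_iff _ _).mpr ⟨k, rfl⟩
            have hadjl : hcAdj i₁ (hcFlip i₁ l) := (hcAdj_iff _ _).mpr ⟨l, rfl⟩
            rintro (rfl | rfl)
            · refine ⟨fun h => ((hcEven_flip i₁ k).mp h) hev, hadjk, ?_⟩
              have h' : hcFlip i₂ l = hcFlip i₁ k := by rw [hb, hcFlip_flip]
              exact (hcAdj_iff _ _).mpr ⟨l, h'.symm⟩
            · refine ⟨fun h => ((hcEven_flip i₁ l).mp h) hev, hadjl, ?_⟩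
              have h' : hcFlip i₂ k = hcFlip i₁ l := by
                rw [hb, ← flip_comm hkl, hcFlip_flip]
              exact (hcAdj_iff _ _).mpr ⟨k, h'.symm⟩
        rw [hset, Finset.sum_pair hne, conj_ctWeight, conj_ctWeight]
        have e1 : ctWeight t i₁ (hcFlip i₁ k)
            = (-1) ^ hcPar k i₁ * (Real.sqrt (t k) : ℂ) := ctWeight_flip t i₁ k
        have e3 : ctWeight t i₁ (hcFlip i₁ l)
            = (-1) ^ hcPar l i₁ * (Real.sqrt (t l) : ℂ) := ctWeight_flip t i₁ l
        have e2 : ctWeight t i₂ (hcFlip i₁ k)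
            = (-1) ^ hcPar l i₂ * (Real.sqrt (t l) : ℂ) := by
          have h' : hcFlip i₂ l = hcFlip i₁ k := by rw [hb, hcFlip_flip]
          rw [← h']
          exact ctWeight_flip t i₂ l
        have e4 : ctWeight t i₂ (hcFlip i₁ l)
            = (-1) ^ hcPar k i₂ * (Real.sqrt (t k) : ℂ) := by
          have h' : hcFlip i₂ k = hcFlip i₁ l := by
            rw [hb, ← flip_comm hkl, hcFlip_flip]
          rw [← h']
          exact ctWeight_flip t i₂ k
        rw [e1, e2, e3, e4]
        apply cancel_lemma
        have hp := parity_odd hkl i₁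
        rw [← hb] at hp
        omega
      · rw [Finset.filter_eq_empty_iff.mpr, Finset.sum_empty]
        rintro x - ⟨-, ha, hb'⟩
        obtain ⟨k, l, hkl, hb2, -⟩ := common_adj hii (hcAdj_comm ha) (hcAdj_comm hb')
        exact hex ⟨k, l, hkl, hb2⟩
  · ext i
    simp only [UFin, Finset.mem_filter, Finset.mem_univ, true_and]
    exact hU i
end
end
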